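/- Let H be an N×N Hadamard matrix whose first row and first column are constant 1/√N. If H is equivalent to the standard N×N Hadamard matrix, then H is permutation equivalent to the standard Hadamard matrix, i.e., there exist permutations π, ρ of the index set such that H_{i,j} equals the (π(i), ρ(j)) entry of the standard Hadamard matrix for all i, j. -/

import Mathlib

open Matrix
open scoped ComplexConjugate

/-- An `N × N` complex matrix is a Hadamard matrix if it is unitary and all its entries have
absolute value `1/√N`. -/
def IsHadamardMatrix {N : ℕ} (H : Matrix (Fin N) (Fin N) ℂ) : Prop :=
  H ∈ Matrix.unitaryGroup (Fin N) ℂ ∧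
    ∀ i j, ‖H i j‖ = 1 / Real.sqrt N

/-- Two Hadamard matrices are equivalent: `H' i j = cᵢ dⱼ H (π i) (ρ j)` for permutations
`π, ρ` and unimodular constants `cᵢ, dⱼ`. -/
def HadamardEquivalent {N : ℕ} (H H' : Matrix (Fin N) (Fin N) ℂ) : Prop :=
  ∃ (π ρ : Equiv.Perm (Fin N)) (c d : Fin N → ℂ),
    (∀ i, ‖c i‖ = 1) ∧ (∀ j, ‖d j‖ = 1) ∧
    ∀ i j, H' i j = c i * d j * H (π i) (ρ j)

/-- The standard `N × N` Hadamard matrix `(1/√N)(e^{2πi jk/N})`. -/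
noncomputable def stdHadamard (N : ℕ) : Matrix (Fin N) (Fin N) ℂ :=
  fun j k => ((1 / Real.sqrt N : ℝ) : ℂ) *
    Complex.exp (2 * (Real.pi : ℂ) * Complex.I * (j : ℕ) * (k : ℕ) / (N : ℂ))

/-!
Write `H i j = cᵢ dⱼ ψ(xᵢ yⱼ) / √N` with `ψ` the standard additive character of
`ZMod N`, `xᵢ = π i` and `yⱼ = ρ j`. Normalisation of the first row and column says that
`cᵢ dⱼ ψ(xᵢ yⱼ) = 1` whenever `i = 0` or `j = 0`, and expanding
`(xᵢ - x₀)(yⱼ - y₀)` then shows `cᵢ dⱼ ψ(xᵢ yⱼ) = ψ((xᵢ - x₀)(yⱼ - y₀))`.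
So `H` is the standard matrix with rows permuted by `i ↦ π i - π 0` and columns by
`j ↦ ρ j - ρ 0`.
-/

theorem AddChar.mul_mul_map_mul_eq_map_sub_mul_sub {R M ι κ : Type*} [CommRing R]
    [CommMonoid M] (ψ : AddChar R M) {x : ι → R} {y : κ → R} {c : ι → M} {d : κ → M}
    {i₀ : ι} {j₀ : κ} (hrow : ∀ j, c i₀ * d j * ψ (x i₀ * y j) = 1)
    (hcol : ∀ i, c i * d j₀ * ψ (x i * y j₀) = 1) (i : ι) (j : κ) :
    c i * d j * ψ (x i * y j) = ψ ((x i - x i₀) * (y j - y j₀)) := by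
  have hexpand : (x i - x i₀) * (y j - y j₀) + (x i * y j₀ + x i₀ * y j) =
      x i * y j + x i₀ * y j₀ := by
    ring
  calc c i * d j * ψ (x i * y j)
      = c i * d j * ψ (x i * y j) * (c i₀ * d j₀ * ψ (x i₀ * y j₀)) := by
        rw [hcol, mul_one]
    _ = ψ (x i * y j + x i₀ * y j₀) * (c i * d j₀ * c i₀ * d j) := by
      rw [AddChar.map_add_eq_mul]; ac_rfl
    _ = ψ ((x i - x i₀) * (y j - y j₀)) *
          ((c i * d j₀ * ψ (x i * y j₀)) * (c i₀ * d j * ψ (x i₀ * y j))) := by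
      rw [← hexpand, AddChar.map_add_eq_mul, AddChar.map_add_eq_mul]; ac_rfl
    _ = ψ ((x i - x i₀) * (y j - y j₀)) := by rw [hrow, hcol, mul_one, mul_one]

theorem Fin.natCast_val_sub {n : ℕ} (a b : Fin n) :
    (((a - b : Fin n) : ℕ) : ZMod n) = (a : ℕ) - (b : ℕ) := by
  rw [Fin.sub_def]
  simp [ZMod.natCast_mod, Nat.cast_sub b.isLt.le, neg_add_eq_sub]

theorem stdHadamard_apply (N : ℕ) [NeZero N] (a b : Fin N) :
    stdHadamard N a b = ((1 / Real.sqrt N : ℝ) : ℂ) *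
      ZMod.stdAddChar (((a : ℕ) : ZMod N) * ((b : ℕ) : ZMod N)) := by
  rw [← Nat.cast_mul, ZMod.stdAddChar_apply, ZMod.toCircle_natCast, stdHadamard]
  push_cast
  ring_nf

theorem equiv_std_implies_perm_equiv_general (N : ℕ) [NeZero N] (H : Matrix (Fin N) (Fin N) ℂ)
    (hHrow : ∀ j, H 0 j = ((1 / Real.sqrt N : ℝ) : ℂ))
    (hHcol : ∀ i, H i 0 = ((1 / Real.sqrt N : ℝ) : ℂ))
    (hequiv : HadamardEquivalent (stdHadamard N) H) :
    ∃ π ρ : Equiv.Perm (Fin N), ∀ i j, H i j = stdHadamard N (π i) (ρ j) := by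
  obtain ⟨π, ρ, c, d, -, -, hH⟩ := hequiv
  set s : ℂ := ((1 / Real.sqrt N : ℝ) : ℂ)
  have hs : s ≠ 0 := by
    have : (0 : ℝ) < N := Nat.cast_pos.mpr (NeZero.pos N)
    simp only [s, Complex.ofReal_ne_zero]
    positivity
  have hH_char : ∀ i j, H i j = s * (c i * d j *
      ZMod.stdAddChar (((π i : ℕ) : ZMod N) * ((ρ j : ℕ) : ZMod N))) := by
    intro i j
    rw [hH, stdHadamard_apply]
    ring
  have normalized : ∀ i j, H i j = s → c i * d j *
      ZMod.stdAddChar (((π i : ℕ) : ZMod N) * ((ρ j : ℕ) : ZMod N)) = 1 := fun i j h =>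
    mul_left_cancel₀ hs (by rw [← hH_char, h, mul_one])
  refine ⟨π.trans (Equiv.subRight (π 0)), ρ.trans (Equiv.subRight (ρ 0)), fun i j => ?_⟩
  have hshift := ZMod.stdAddChar.mul_mul_map_mul_eq_map_sub_mul_sub
    (x := fun i => ((π i : ℕ) : ZMod N)) (y := fun j => ((ρ j : ℕ) : ZMod N))
    (fun j => normalized 0 j (hHrow j)) (fun i => normalized i 0 (hHcol i)) i j
  rw [hH_char, hshift, stdHadamard_apply]
  simp only [Equiv.trans_apply, Equiv.subRight_apply, Fin.natCast_val_sub, s]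

/-- A Hadamard matrix whose first row and column are constant `1/√N` and
which is equivalent to the standard Hadamard matrix is permutation equivalent to it. -/
theorem equiv_std_implies_perm_equiv (N : ℕ) [NeZero N] (H : Matrix (Fin N) (Fin N) ℂ)
    (hH : IsHadamardMatrix H)
    (hHrow : ∀ j, H 0 j = ((1 / Real.sqrt N : ℝ) : ℂ))
    (hHcol : ∀ i, H i 0 = ((1 / Real.sqrt N : ℝ) : ℂ))
    (hequiv : HadamardEquivalent (stdHadamard N) H) :
    ∃ π ρ : Equiv.Perm (Fin N), ∀ i j, H i j = stdHadamard N (π i) (ρ j) :=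
  equiv_std_implies_perm_equiv_general N H hHrow hHcol hequiv
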